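/- Let X be a space and let R > 0. Then there exist an integer n ≥ 0 and matrices A_0, A_1, …, A_n ∈ S_X with A_0 = 1 (the identity matrix) such that, for every partial translation v with supp(v) ⊆ Tube_X(R), there exist diagonal matrices f_0, f_1, …, f_n ∈ ℓ∞(X) with f_i² = f_i (i.e. with entries in {0,1}) satisfying v = Σ_{i=0}^n f_i A_i and vv* = Σ_{i=0}^n f_i. -/

import Mathlib

open scoped ENNReal Classical

noncomputable section

namespace GeomPropT

variable {X : Type*}

/-- The tube of diameter `R` in `X × X`. -/
def Tube (X : Type*) [EMetricSpace X] (R : ℝ≥0∞) : Set (X × X) :=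
  {p : X × X | edist p.1 p.2 ≤ R}

/-- A subset of `X × X` is controlled if it is contained in a tube of finite diameter. -/
def Controlled [EMetricSpace X] (E : Set (X × X)) : Prop :=
  ∃ R : ℝ≥0∞, R < ⊤ ∧ E ⊆ Tube X R

/-- `X` has bounded geometry if balls of any given finite radius have uniformly
bounded cardinality. -/
def BoundedGeometry (X : Type*) [EMetricSpace X] : Prop :=
  ∀ R : ℝ≥0∞, R < ⊤ → ∃ N : ℕ, ∀ x : X,
    {y : X | edist x y ≤ R}.Finite ∧ {y : X | edist x y ≤ R}.ncard ≤ N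

/-- Composition of subsets of `X × X`. -/
def compRel (E F : Set (X × X)) : Set (X × X) :=
  {p : X × X | ∃ z : X, (p.1, z) ∈ E ∧ (z, p.2) ∈ F}

/-- `compPow E n` is the `(n+1)`-fold composition `E^{∘(n+1)}`. -/
def compPow (E : Set (X × X)) : ℕ → Set (X × X)
  | 0 => E
  | n + 1 => compRel E (compPow E n)

/-- A controlled set is generating if every controlled set is contained in some
iterated composition of it. -/
def Generating [EMetricSpace X] (E : Set (X × X)) : Prop :=
  Controlled E ∧ ∀ F : Set (X × X), Controlled F → ∃ n : ℕ, F ⊆ compPow E n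

/-- `X` is monogenic if it admits a controlled generating set. -/
def Monogenic (X : Type*) [EMetricSpace X] : Prop :=
  ∃ E : Set (X × X), Generating E

/-- A "space": bounded geometry, monogenic, with at most countably many coarse
components. -/
structure IsSpace (X : Type*) [EMetricSpace X] : Prop where
  boundedGeometry : BoundedGeometry X
  monogenic : Monogenic X
  countableComponents : Set.Countable {C : Set X | ∃ x : X, C = {y : X | edist x y < ⊤}}

/-- The support of a matrix. -/
def matSupport (T : X → X → ℂ) : Set (X × X) := {p : X × X | T p.1 p.2 ≠ 0}

/-- Membership in `ℂ_u[X]`: uniformly bounded entries and controlled support. -/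
def CuElem [EMetricSpace X] (T : X → X → ℂ) : Prop :=
  (∃ M : ℝ, ∀ x y : X, ‖T x y‖ ≤ M) ∧ Controlled (matSupport T)

/-- The identity matrix. -/
def matOne : X → X → ℂ := fun x y => if x = y then 1 else 0

/-- Matrix multiplication. -/
def matMul (T S : X → X → ℂ) : X → X → ℂ := fun x y => ∑' z : X, T x z * S z y

/-- Matrix adjoint. -/
def matStar (T : X → X → ℂ) : X → X → ℂ := fun x y => starRingEnd ℂ (T y x)

/-- Matrix powers. -/
def matPow (A : X → X → ℂ) : ℕ → X → X → ℂ
  | 0 => matOne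
  | n + 1 => matMul A (matPow A n)

/-- A function `f ∈ ℓ∞(X)` viewed as a diagonal matrix. -/
def diag (f : X → ℂ) : X → X → ℂ := fun x y => if x = y then f x else 0

/-- The matrix of a partial translation: a `{0,1}`-matrix with at most one `1` in
each row and each column, and controlled support. -/
def IsPartialTranslation [EMetricSpace X] (v : X → X → ℂ) : Prop :=
  (∀ x y : X, v x y = 0 ∨ v x y = 1) ∧
  (∀ x y y' : X, v x y = 1 → v x y' = 1 → y = y') ∧
  (∀ x x' y : X, v x y = 1 → v x' y = 1 → x = x') ∧
  Controlled (matSupport v)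

/-- Membership in `S_X`: finite propagation permutation matrices. -/
def IsPermMatrix [EMetricSpace X] (A : X → X → ℂ) : Prop :=
  (∀ x y : X, A x y = 0 ∨ A x y = 1) ∧
  (∀ x : X, ∃! y : X, A x y = 1) ∧
  (∀ y : X, ∃! x : X, A x y = 1) ∧
  Controlled (matSupport A)

/-- Membership in `A_X` with common row/column sum `c`. -/
def MemAX [EMetricSpace X] (A : X → X → ℂ) (c : ℂ) : Prop :=
  CuElem A ∧ ∀ x : X, HasSum (fun y => A x y) c ∧ HasSum (fun y => A y x) c

variable {H : Type*} [NormedAddCommGroup H] [InnerProductSpace ℂ H]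

/-- A representation of `ℂ_u[X]`: a unital `*`-homomorphism into `B(H)`. -/
structure IsRepresentation [EMetricSpace X] [CompleteSpace H]
    (π : (X → X → ℂ) → (H →L[ℂ] H)) : Prop where
  map_one : π matOne = 1
  map_add : ∀ T S : X → X → ℂ, CuElem T → CuElem S → π (T + S) = π T + π S
  map_smul : ∀ (c : ℂ) (T : X → X → ℂ), CuElem T → π (c • T) = c • π T
  map_mul : ∀ T S : X → X → ℂ, CuElem T → CuElem S → π (matMul T S) = π T * π S
  map_star : ∀ T : X → X → ℂ, CuElem T → π (matStar T) = ContinuousLinearMap.adjoint (π T)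

/-- The subspace `H^π` of invariant vectors. -/
def invariantSubmodule [EMetricSpace X] (π : (X → X → ℂ) → (H →L[ℂ] H)) :
    Submodule ℂ H where
  carrier := {ξ : H | ∀ v : X → X → ℂ, IsPartialTranslation v →
    π v ξ = π (matMul v (matStar v)) ξ}
  add_mem' := by
    intro a b ha hb v hv
    simp only [map_add, ha v hv, hb v hv]
  zero_mem' := by
    intro v hv
    simp
  smul_mem' := by
    intro c ξ hξ v hv
    simp only [map_smul, hξ v hv]

/-- `p` is the orthogonal projection onto `S`. -/
def IsOrthoProjOnto (p : H →L[ℂ] H) (S : Submodule ℂ H) : Prop :=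
  ∀ ξ : H, p ξ ∈ S ∧ ξ - p ξ ∈ Sᗮ

/-- Geometric Property (T). -/
def HasPropertyT (X : Type*) [EMetricSpace X] : Prop :=
  ∀ E : Set (X × X), Generating E →
    ∃ c : ℝ, 0 < c ∧
      ∀ (H : Type) [NormedAddCommGroup H] [InnerProductSpace ℂ H] [CompleteSpace H]
        (π : (X → X → ℂ) → (H →L[ℂ] H)), IsRepresentation π →
        ∀ ξ ∈ (invariantSubmodule π)ᗮ,
          ∃ v : X → X → ℂ, IsPartialTranslation v ∧ matSupport v ⊆ E ∧
            c * ‖ξ‖ ≤ ‖π v ξ - π (matMul v (matStar v)) ξ‖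

/-- Bounded functions (elements of `ℓ∞(X)`). -/
def BddFun (f : X → ℂ) : Prop := ∃ M : ℝ, ∀ x : X, ‖f x‖ ≤ M

/-- `f ∘ t`, extended by `0`, where `t` is the partial translation with matrix `v`. -/
def translateFun (v : X → X → ℂ) (f : X → ℂ) : X → ℂ := fun y => ∑' x : X, v x y * f x

/-- An invariant mean on `ℓ∞(X)`: a positive unital linear functional invariant
under partial translations. -/
def IsInvariantMean [EMetricSpace X] (φ : (X → ℂ) → ℂ) : Prop :=
  (∀ f g : X → ℂ, BddFun f → BddFun g → φ (f + g) = φ f + φ g) ∧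
  (∀ (c : ℂ) (f : X → ℂ), BddFun f → φ (c • f) = c * φ f) ∧
  φ (fun _ => 1) = 1 ∧
  (∀ f : X → ℂ, BddFun f → (∀ x, 0 ≤ (f x).re ∧ (f x).im = 0) →
    0 ≤ (φ f).re ∧ (φ f).im = 0) ∧
  (∀ f : X → ℂ, BddFun f → ∀ v : X → X → ℂ, IsPartialTranslation v →
    (∀ x : X, f x ≠ 0 → ∃ y : X, v x y = 1) → φ (translateFun v f) = φ f)

/-- `X` is amenable if `ℓ∞(X)` admits an invariant mean. -/
def IsAmenable (X : Type*) [EMetricSpace X] : Prop :=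
  ∃ φ : (X → ℂ) → ℂ, IsInvariantMean φ

/-- A representation of `ℂ_u[X]` bundled with its Hilbert space. -/
structure HilbertRep (X : Type*) [EMetricSpace X] where
  H : Type
  [nacg : NormedAddCommGroup H]
  [ips : InnerProductSpace ℂ H]
  [cs : CompleteSpace H]
  π : (X → X → ℂ) → (H →L[ℂ] H)
  rep : IsRepresentation π

attribute [instance] HilbertRep.nacg HilbertRep.ips HilbertRep.cs

/-! By bounded geometry, the graph joining distinct points at distance at most `2R` has bounded
degree, so a greedy colouring along a well-order of `X` uses finitely many colours and gives
distinct colours to distinct points at distance at most `2R`. For each pair of colours `(a, b)`,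
the pairs of points at distance at most `R` coloured `a` and `b` then form a matching, and
swapping matched points is a permutation of `X` of propagation at most `R`. These finitely many
permutation matrices cover `Tube X R`, so every row of a partial translation supported in
`Tube X R` is a row of one of them, and `f i` records at which rows `A i` is used. -/

theorem _root_.Nat.exists_le_notMem_of_ncard_le {s : Set ℕ} {N : ℕ} (hs : s.Finite)
    (h : s.ncard ≤ N) : ∃ n ≤ N, n ∉ s := by
  obtain ⟨n, hn, hns⟩ := Finset.exists_mem_notMem_of_card_lt_card
    (s := hs.toFinset) (t := Finset.range (N + 1))
    (by rw [Finset.card_range, ← Set.ncard_eq_toFinset_card s hs]; omega)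
  exact ⟨n, Nat.lt_succ_iff.mp (Finset.mem_range.mp hn), by simpa using hns⟩

theorem _root_.SimpleGraph.colorable_succ_of_ncard_neighborSet_le {V : Type*} (G : SimpleGraph V)
    {N : ℕ} (hfin : ∀ v, (G.neighborSet v).Finite) (hdeg : ∀ v, (G.neighborSet v).ncard ≤ N) :
    G.Colorable (N + 1) := by
  have wf := (WellOrderingRel.isWellOrder (α := V)).wf
  let c : V → ℕ := wf.fix fun v rec =>
    sInf {n | ∀ w (h : WellOrderingRel w v), G.Adj v w → rec w h ≠ n}
  have hc v : c v = sInf {n | ∀ w, WellOrderingRel w v → G.Adj v w → c w ≠ n} := wf.fix_eq _ v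
  have hfree v : ∃ n ≤ N, ∀ w, WellOrderingRel w v → G.Adj v w → c w ≠ n := by
    obtain ⟨n, hnN, hn⟩ := Nat.exists_le_notMem_of_ncard_le ((hfin v).image c)
      ((Set.ncard_image_le (hfin v)).trans (hdeg v))
    exact ⟨n, hnN, fun w _ hvw hcw => hn ⟨w, hvw, hcw⟩⟩
  have hgood v : (∀ w, WellOrderingRel w v → G.Adj v w → c w ≠ c v) ∧ c v ≤ N := by
    obtain ⟨n, hnN, hn⟩ := hfree v
    have hmem : n ∈ {n | ∀ w, WellOrderingRel w v → G.Adj v w → c w ≠ n} := hn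
    rw [hc v]
    exact ⟨Nat.sInf_mem ⟨n, hmem⟩, (Nat.sInf_le hmem).trans hnN⟩
  refine (SimpleGraph.colorable_iff_exists_bdd_nat_coloring _).2
    ⟨SimpleGraph.Coloring.mk c fun {v w} hvw => ?_, fun v => Nat.lt_succ_of_le (hgood v).2⟩
  rcases trichotomous_of WellOrderingRel v w with h | rfl | h
  · exact (hgood w).1 v h hvw.symm
  · exact (hvw.ne rfl).elim
  · exact ((hgood v).1 w h hvw).symm

section MatchingSwap

variable {r : X → X → Prop}

def matchingSwap (r : X → X → Prop) (x : X) : X := if h : ∃ y, r x y then h.choose else x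

lemma matchingSwap_eq_self_or_rel (x : X) : matchingSwap r x = x ∨ r x (matchingSwap r x) := by
  unfold matchingSwap
  split_ifs with h
  · exact Or.inr h.choose_spec
  · exact Or.inl rfl

lemma matchingSwap_eq_of_rel (hr : Relator.RightUnique r) {x y : X} (h : r x y) :
    matchingSwap r x = y := by
  have hex : ∃ y, r x y := ⟨y, h⟩
  rw [matchingSwap, dif_pos hex]
  exact hr hex.choose_spec h

lemma involutive_matchingSwap (hsymm : ∀ x y, r x y → r y x) (hr : Relator.RightUnique r) :
    Function.Involutive (matchingSwap r) := fun x => by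
  rcases matchingSwap_eq_self_or_rel (r := r) x with h | h
  · rw [h, h]
  · exact matchingSwap_eq_of_rel hr (hsymm _ _ h)

end MatchingSwap

def permMatrix (σ : X → X) : X → X → ℂ := fun x y => if σ x = y then 1 else 0

lemma permMatrix_eq_one_iff {σ : X → X} {x y : X} : permMatrix σ x y = 1 ↔ σ x = y := by
  unfold permMatrix
  split_ifs with h <;> simp [h]

lemma isPermMatrix_permMatrix [EMetricSpace X] {σ : X → X} (hσ : σ.Bijective) {R : ℝ≥0∞}
    (hR : R < ⊤) (hσR : ∀ x, edist x (σ x) ≤ R) : IsPermMatrix (permMatrix σ) := by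
  refine ⟨fun x y => ?_, fun x => ?_, fun y => ?_, R, hR, fun p hp => ?_⟩
  · unfold permMatrix
    split_ifs <;> simp
  · exact ⟨σ x, permMatrix_eq_one_iff.2 rfl, fun y hy => (permMatrix_eq_one_iff.1 hy).symm⟩
  · obtain ⟨x, rfl⟩ := hσ.2 y
    exact ⟨x, permMatrix_eq_one_iff.2 rfl, fun x' hx' => hσ.1 (permMatrix_eq_one_iff.1 hx')⟩
  · have hσp : σ p.1 = p.2 := by
      by_contra h
      exact hp (if_neg h)
    simpa [Tube, ← hσp] using hσR p.1

lemma isPermMatrix_matOne [EMetricSpace X] : IsPermMatrix (matOne : X → X → ℂ) :=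
  isPermMatrix_permMatrix Function.bijective_id ENNReal.zero_lt_top (fun x => by simp)

lemma IsPermMatrix.eq_zero_of_eq_one [EMetricSpace X] {A : X → X → ℂ} (hA : IsPermMatrix A)
    {x y z : X} (hz : A x z = 1) (hyz : y ≠ z) : A x y = 0 :=
  (hA.1 x y).resolve_right fun hy => hyz ((hA.2.1 x).unique hy hz)

namespace IsPartialTranslation

variable [EMetricSpace X] {v : X → X → ℂ}

lemma eq_zero_of_eq_one (hv : IsPartialTranslation v) {x y z : X} (hz : v x z = 1)
    (hyz : y ≠ z) : v x y = 0 :=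
  (hv.1 x y).resolve_right fun hy => hyz (hv.2.1 x y z hy hz)

lemma matMul_matStar_apply (hv : IsPartialTranslation v) (x y : X) :
    matMul v (matStar v) x y = if x = y then (if ∃ z, v x z = 1 then 1 else 0) else 0 := by
  change ∑' z, v x z * starRingEnd ℂ (v y z) = _
  by_cases hxy : x = y
  · subst hxy
    by_cases hx : ∃ z, v x z = 1
    · obtain ⟨z, hz⟩ := hx
      rw [tsum_eq_single z fun z' hz' => by rw [hv.eq_zero_of_eq_one hz hz', zero_mul]]
      simp [hz, show ∃ z, v x z = 1 from ⟨z, hz⟩]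
    · push Not at hx
      have hrow z : v x z = 0 := (hv.1 x z).resolve_right (hx z)
      simp [hrow]
  · have hterm z : v x z * starRingEnd ℂ (v y z) = 0 := by
      rcases hv.1 x z with h | h
      · rw [h, zero_mul]
      · rcases hv.1 y z with h' | h'
        · rw [h', map_zero, mul_zero]
        · exact (hxy (hv.2.2.1 x y z h h')).elim
    simp [hterm, hxy]

end IsPartialTranslation

theorem exists_decomposition_of_covering {ι : Type*} [Fintype ι] [EMetricSpace X] {R : ℝ≥0∞}
    {A : ι → X → X → ℂ} (hA : ∀ i, IsPermMatrix (A i))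
    (hcov : ∀ x y, edist x y ≤ R → ∃ i, A i x y = 1)
    {v : X → X → ℂ} (hv : IsPartialTranslation v) (hvR : matSupport v ⊆ Tube X R) :
    ∃ f : ι → X → ℂ, (∀ i x, f i x = 0 ∨ f i x = 1) ∧
      (∀ x y, v x y = ∑ i, f i x * A i x y) ∧
      ∀ x y, matMul v (matStar v) x y = if x = y then ∑ i, f i x else 0 := by
  have hidx x : ∃ i, ∀ z, v x z = 1 → A i x z = 1 := by
    by_cases h : ∃ z, v x z = 1
    · obtain ⟨z, hz⟩ := h
      obtain ⟨i, hi⟩ := hcov x z (hvR (show (x, z) ∈ matSupport v by simp [matSupport, hz]))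
      exact ⟨i, fun z' hz' => hv.2.1 x z z' hz hz' ▸ hi⟩
    · obtain ⟨i, hi⟩ := hcov x x (by simp)
      exact ⟨i, fun z hz => (h ⟨z, hz⟩).elim⟩
  choose idx hidx using hidx
  let d : X → ℂ := fun x => if ∃ z, v x z = 1 then 1 else 0
  refine ⟨fun i x => (Pi.single (idx x) (d x) : ι → ℂ) i, fun i x => ?_, fun x y => ?_,
    fun x y => ?_⟩
  · rcases eq_or_ne i (idx x) with rfl | h
    · simp only [Pi.single_eq_same, d]
      split_ifs <;> simp
    · simp [h]
  · simp only [Pi.single_apply, ite_mul, zero_mul, Finset.sum_ite_eq', Finset.mem_univ, if_true]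
    rcases hv.1 x y with h | h
    · by_cases hx : ∃ z, v x z = 1
      · obtain ⟨z, hz⟩ := hx
        have hyz : y ≠ z := by rintro rfl; simp [h] at hz
        simp [d, h, (hA (idx x)).eq_zero_of_eq_one (hidx x z hz) hyz]
      · simp [d, h, hx]
    · simp [d, h, hidx x y h, show ∃ z, v x z = 1 from ⟨y, h⟩]
  · simp [hv.matMul_matStar_apply, Pi.single_apply, d]

section ColorSwap

variable [EMetricSpace X] {α : Type*}

def colorSwapRel (c : X → α) (R : ℝ≥0∞) (a b : α) (x y : X) : Prop :=
  edist x y ≤ R ∧ (c x = a ∧ c y = b ∨ c x = b ∧ c y = a)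

variable {c : X → α} {R : ℝ≥0∞}

lemma colorSwapRel_symm {a b : α} {x y : X} (h : colorSwapRel c R a b x y) :
    colorSwapRel c R a b y x :=
  ⟨by rw [edist_comm]; exact h.1, h.2.symm.imp And.symm And.symm⟩

lemma rightUnique_colorSwapRel (hc : ∀ x y, edist x y ≤ 2 * R → c x = c y → x = y) (a b : α) :
    Relator.RightUnique (colorSwapRel c R a b) := by
  rintro x y y' ⟨hxy, hy⟩ ⟨hxy', hy'⟩
  refine hc y y' ?_ ?_
  · calc edist y y' ≤ edist y x + edist x y' := edist_triangle _ _ _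
      _ ≤ R + R := add_le_add (by rwa [edist_comm]) hxy'
      _ = 2 * R := (two_mul R).symm
  · rcases hy with ⟨h1, h2⟩ | ⟨h1, h2⟩ <;> rcases hy' with ⟨h1', h2'⟩ | ⟨h1', h2'⟩ <;> grind

lemma isPermMatrix_colorSwap (hc : ∀ x y, edist x y ≤ 2 * R → c x = c y → x = y) (hR : R < ⊤)
    (a b : α) : IsPermMatrix (permMatrix (matchingSwap (colorSwapRel c R a b))) := by
  refine isPermMatrix_permMatrix (involutive_matchingSwap (fun _ _ => colorSwapRel_symm)
    (rightUnique_colorSwapRel hc a b)).bijective hR fun x => ?_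
  rcases matchingSwap_eq_self_or_rel (r := colorSwapRel c R a b) x with h | h
  · simp [h]
  · exact h.1

lemma colorSwap_apply_eq_one (hc : ∀ x y, edist x y ≤ 2 * R → c x = c y → x = y) {x y : X}
    (hxy : edist x y ≤ R) : permMatrix (matchingSwap (colorSwapRel c R (c x) (c y))) x y = 1 :=
  permMatrix_eq_one_iff.2
    (matchingSwap_eq_of_rel (rightUnique_colorSwapRel hc _ _) ⟨hxy, Or.inl ⟨rfl, rfl⟩⟩)

end ColorSwap

theorem exists_separated_coloring [EMetricSpace X] (hX : BoundedGeometry X) {R : ℝ≥0∞}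
    (hR : R < ⊤) : ∃ (N : ℕ) (c : X → Fin N), ∀ x y, edist x y ≤ R → c x = c y → x = y := by
  obtain ⟨N, hN⟩ := hX R hR
  let near : X → X → Prop := fun x y => edist x y ≤ R
  let G := SimpleGraph.fromRel near
  have hnbhd x : G.neighborSet x ⊆ {y | edist x y ≤ R} := fun y hy => by
    obtain ⟨-, hxy | hyx⟩ := (SimpleGraph.fromRel_adj near x y).1 hy
    exacts [hxy, (edist_comm x y).trans_le hyx]
  obtain ⟨C⟩ := G.colorable_succ_of_ncard_neighborSet_le (fun x => (hN x).1.subset (hnbhd x))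
    fun x => (Set.ncard_le_ncard (hnbhd x) (hN x).1).trans (hN x).2
  refine ⟨N + 1, C, fun x y hxy hCxy => ?_⟩
  by_contra hne
  exact C.valid ((SimpleGraph.fromRel_adj _ _ _).2 ⟨hne, Or.inl hxy⟩) hCxy

theorem exists_isPermMatrix_cover [EMetricSpace X] (hX : BoundedGeometry X) {R : ℝ≥0∞}
    (hR : R < ⊤) : ∃ (m : ℕ) (B : Fin m → X → X → ℂ),
      (∀ j, IsPermMatrix (B j)) ∧ ∀ x y, edist x y ≤ R → ∃ j, B j x y = 1 := by
  obtain ⟨N, c, hc⟩ :=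
    exists_separated_coloring hX (R := 2 * R) (ENNReal.mul_lt_top ENNReal.ofNat_lt_top hR)
  let B : Fin N × Fin N → X → X → ℂ := fun ab =>
    permMatrix (matchingSwap (colorSwapRel c R ab.1 ab.2))
  refine ⟨N * N, B ∘ finProdFinEquiv.symm, fun j => isPermMatrix_colorSwap hc hR _ _,
    fun x y hxy => ⟨finProdFinEquiv (c x, c y), ?_⟩⟩
  simpa [B] using colorSwap_apply_eq_one hc hxy

theorem statement11_general {X : Type*} [EMetricSpace X] (hX : IsSpace X)
    (R : ℝ≥0∞) (hR : R < ⊤) :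
    ∃ (n : ℕ) (A : Fin (n + 1) → X → X → ℂ),
      A 0 = matOne ∧ (∀ i, IsPermMatrix (A i)) ∧
      ∀ v : X → X → ℂ, IsPartialTranslation v → matSupport v ⊆ Tube X R →
        ∃ f : Fin (n + 1) → X → ℂ,
          (∀ i x, f i x = 0 ∨ f i x = 1) ∧
          (∀ x y : X, v x y = ∑ i : Fin (n + 1), f i x * A i x y) ∧
          (∀ x y : X, matMul v (matStar v) x y =
            if x = y then ∑ i : Fin (n + 1), f i x else 0) := by
  obtain ⟨m, B, hB, hcov⟩ := exists_isPermMatrix_cover hX.boundedGeometry hR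
  let A : Fin (m + 1) → X → X → ℂ := Fin.cons matOne B
  have hA : ∀ i, IsPermMatrix (A i) := Fin.forall_fin_succ.2 ⟨isPermMatrix_matOne, hB⟩
  refine ⟨m, A, rfl, hA, fun v hv hvR =>
    exists_decomposition_of_covering hA (fun x y hxy => ?_) hv hvR⟩
  obtain ⟨j, hj⟩ := hcov x y hxy
  exact ⟨j.succ, hj⟩

/-- For every `R > 0` there are finitely many permutation matrices
`A_0 = 1, A_1, …, A_n ∈ S_X` such that every partial translation supported in
`Tube_X(R)` decomposes as `v = Σ f_i A_i` with idempotent diagonal coefficients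
`f_i`, and `vv* = Σ f_i`. -/
theorem statement11 {X : Type*} [EMetricSpace X] (hX : IsSpace X)
    (R : ℝ≥0∞) (hR0 : 0 < R) (hR : R < ⊤) :
    ∃ (n : ℕ) (A : Fin (n + 1) → X → X → ℂ),
      A 0 = matOne ∧ (∀ i, IsPermMatrix (A i)) ∧
      ∀ v : X → X → ℂ, IsPartialTranslation v → matSupport v ⊆ Tube X R →
        ∃ f : Fin (n + 1) → X → ℂ,
          (∀ i x, f i x = 0 ∨ f i x = 1) ∧
          (∀ x y : X, v x y = ∑ i : Fin (n + 1), f i x * A i x y) ∧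
          (∀ x y : X, matMul v (matStar v) x y =
            if x = y then ∑ i : Fin (n + 1), f i x else 0) :=
  statement11_general hX R hR

end GeomPropT
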